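/- arXiv:math/0601475 — 8 statements merged into one kernel-verified Lean document; each statement's English description precedes it below -/
import Mathlib

section
/- Let Φ : ℝ≥0 → ℝ≥0 be an increasing convex differentiable function with Φ(0)=0 such that √Φ is concave. Then for every x ≥ 0, Φ'(x/2) ≥ Φ'(x)/2. -/
/-!
Write `g = √Φ`, so that `Φ' = 2 g g'`. Concavity of `g` together with `g 0 = 0` gives
`g x ≤ 2 g (x/2)`, and makes `g'` antitone, so `g' x ≤ g' (x/2)`. Multiplying these two
inequalities between nonnegative quantities yields
`Φ' x / 2 = g x g' x ≤ 2 g (x/2) g' (x/2) = Φ' (x/2)`.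
-/

open Set

lemma HasDerivWithinAt.nonneg_of_monotoneOn_Ici {f : ℝ → ℝ} {f' a x : ℝ}
    (hf : MonotoneOn f (Ici a)) (hx : a ≤ x) (hd : HasDerivWithinAt f f' (Ici a) x) :
    0 ≤ f' := by
  have hacc : AccPt x (Filter.principal (Ici a)) :=
    (uniqueDiffWithinAt_Ici x).accPt.mono (Filter.principal_mono.2 (Ici_subset_Ici.2 hx))
  exact hd.nonneg_of_monotoneOn hacc hf

lemma ConcaveOn.mul_le_apply_smul {E : Type*} [AddCommGroup E] [Module ℝ E] {s : Set E}
    {f : E → ℝ} (hf : ConcaveOn ℝ s f) (h0 : (0 : E) ∈ s) (hf0 : 0 ≤ f 0) {x : E} (hx : x ∈ s)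
    {t : ℝ} (ht0 : 0 ≤ t) (ht1 : t ≤ 1) : t * f x ≤ f (t • x) := by
  have h := hf.2 h0 hx (sub_nonneg.2 ht1) ht0 (sub_add_cancel 1 t)
  simp only [smul_zero, zero_add, smul_eq_mul] at h
  nlinarith

lemma ConcaveOn.mul_deriv_le_two_mul_mul_deriv_half {g : ℝ → ℝ} {x d d₂ : ℝ}
    (hg : ConcaveOn ℝ (Ici 0) g) (hg0 : 0 ≤ g 0) (hx : 0 < x) (hgx₂ : 0 ≤ g (x / 2))
    (hd : HasDerivWithinAt g d (Ici 0) x) (hd₂ : HasDerivWithinAt g d₂ (Ici 0) (x / 2))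
    (hd_nonneg : 0 ≤ d) : g x * d ≤ 2 * (g (x / 2) * d₂) := by
  have hx₂ : x / 2 ∈ Ici (0 : ℝ) := mem_Ici.2 (by positivity)
  have hlt : x / 2 < x := half_lt_self hx
  have hderiv : d ≤ d₂ :=
    (hg.le_slope_of_hasDerivWithinAt hx₂ hx.le hlt hd).trans
      (hg.slope_le_of_hasDerivWithinAt hx₂ hx.le hlt hd₂)
  have hmid : 2⁻¹ * g x ≤ g (x / 2) := by
    simpa [smul_eq_mul, div_eq_inv_mul] using
      hg.mul_le_apply_smul self_mem_Ici hg0 (mem_Ici.2 hx.le) (by norm_num) (by norm_num)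
  calc g x * d ≤ 2 * g (x / 2) * d := by gcongr; linarith
    _ ≤ 2 * (g (x / 2) * d₂) := by rw [mul_assoc]; gcongr

theorem stmt_2_general (Φ Φ' : ℝ → ℝ)
    (hmono : StrictMonoOn Φ (Ici 0))
    (h0 : Φ 0 = 0)
    (hderiv : ∀ x ∈ Ici (0:ℝ), HasDerivWithinAt Φ (Φ' x) (Ici 0) x)
    (hconc : ConcaveOn ℝ (Ici 0) (fun x => Real.sqrt (Φ x))) :
    ∀ x ∈ Ici (0:ℝ), Φ' (x / 2) ≥ Φ' x / 2 := by
  intro x hx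
  have hΦ'_nonneg : ∀ y ∈ Ici (0:ℝ), 0 ≤ Φ' y := fun y hy =>
    (hderiv y hy).nonneg_of_monotoneOn_Ici hmono.monotoneOn hy
  rcases (mem_Ici.1 hx).eq_or_lt with rfl | hxpos
  · linarith [hΦ'_nonneg 0 self_mem_Ici]
  have hΦ_pos : ∀ y, 0 < y → 0 < Φ y := fun y hy => h0 ▸ hmono self_mem_Ici hy.le hy
  have hsqrt : ∀ y, 0 < y → HasDerivWithinAt (fun x => Real.sqrt (Φ x))
      (Φ' y / (2 * Real.sqrt (Φ y))) (Ici 0) y := fun y hy =>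
    (hderiv y hy.le).sqrt (hΦ_pos y hy).ne'
  have hsqrt_mul : ∀ y, 0 < y →
      Real.sqrt (Φ y) * (Φ' y / (2 * Real.sqrt (Φ y))) = Φ' y / 2 := fun y hy => by
    have := Real.sqrt_pos.2 (hΦ_pos y hy)
    field_simp
  have key := hconc.mul_deriv_le_two_mul_mul_deriv_half (by simp [h0]) hxpos
    (Real.sqrt_nonneg _) (hsqrt x hxpos) (hsqrt (x / 2) (half_pos hxpos))
    (div_nonneg (hΦ'_nonneg x hx) (by positivity))
  rw [hsqrt_mul x hxpos, hsqrt_mul (x / 2) (half_pos hxpos)] at key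
  linarith

/-- Lemma 13 (iii): if `Φ : [0,∞) → [0,∞)` is increasing, convex, differentiable,
`Φ 0 = 0` and `√Φ` is concave, then for every `x ≥ 0`, `Φ'(x/2) ≥ Φ'(x)/2`. -/
theorem stmt_2 (Φ Φ' : ℝ → ℝ)
    (hmono : StrictMonoOn Φ (Ici 0))
    (hconv : ConvexOn ℝ (Ici 0) Φ)
    (hnonneg : ∀ x ∈ Ici (0:ℝ), 0 ≤ Φ x)
    (h0 : Φ 0 = 0)
    (hderiv : ∀ x ∈ Ici (0:ℝ), HasDerivWithinAt Φ (Φ' x) (Ici 0) x)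
    (hconc : ConcaveOn ℝ (Ici 0) (fun x => Real.sqrt (Φ x))) :
    ∀ x ∈ Ici (0:ℝ), Φ' (x / 2) ≥ Φ' x / 2 :=
  stmt_2_general Φ Φ' hmono h0 hderiv hconc
end

section
/- Let (X,P) be a probability space, g ∈ L²(P), s ≥ 1, and m a median of g under P. Then ∫g² dP − s(∫|g| dP)² ≤ ∫(g−m)² dP − (s−1)(∫|g−m| dP)². -/
open MeasureTheory

lemma med_nonneg {X : Type*} [MeasurableSpace X] (P : Measure X) [IsProbabilityMeasure P]
    (g : X → ℝ) (hmeas : Measurable g) (hint : Integrable g P) (m : ℝ) (hm0 : 0 ≤ m)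
    (hm₂ : P {x | m ≤ g x} ≥ 1/2) :
    ∫ x, |g x - m| ∂P ≤ ∫ x, |g x| ∂P := by
  set S : Set X := {x | m ≤ g x} with hS
  have hSm : MeasurableSet S := measurableSet_le measurable_const hmeas
  set ψ : X → ℝ := fun x => S.indicator (fun _ => 2*m) x - m with hψ
  have intψ : Integrable ψ P := ((integrable_const (2*m)).indicator hSm).sub (integrable_const m)
  have int1 : Integrable (fun x => |g x - m|) P := (hint.sub (integrable_const m)).abs
  have hpt : ∀ x, |g x - m| + ψ x ≤ |g x| := by
    intro x
    by_cases hx : x ∈ S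
    · have h1 : m ≤ g x := hx
      simp only [hψ, Set.indicator_of_mem hx]
      rw [abs_of_nonneg (by linarith : (0:ℝ) ≤ g x - m), abs_of_nonneg (by linarith : (0:ℝ) ≤ g x)]
      linarith
    · simp only [hψ, Set.indicator_of_notMem hx]
      have h2 : |g x - m| ≤ |g x| + |m| := abs_sub (g x) m
      rw [abs_of_nonneg hm0] at h2
      linarith
  have key : ∫ x, |g x - m| ∂P + ∫ x, ψ x ∂P ≤ ∫ x, |g x| ∂P := by
    rw [← integral_add int1 intψ]
    exact integral_mono (int1.add intψ) hint.abs hpt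
  have hψ0 : 0 ≤ ∫ x, ψ x ∂P := by
    have hval : ∫ x, ψ x ∂P = (P S).toReal * (2*m) - m := by
      simp only [hψ]
      rw [integral_sub ((integrable_const (2*m)).indicator hSm) (integrable_const m),
        integral_indicator_const _ hSm, integral_const]
      simp [Measure.real]
    rw [hval]
    have h2 : (1:ℝ)/2 ≤ (P S).toReal := by
      have := ENNReal.toReal_mono (measure_ne_top P S) hm₂
      simpa using this
    nlinarith
  linarith

lemma med {X : Type*} [MeasurableSpace X] (P : Measure X) [IsProbabilityMeasure P]
    (g : X → ℝ) (hmeas : Measurable g) (hint : Integrable g P) (m : ℝ)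
    (hm₁ : P {x | g x ≤ m} ≥ 1/2) (hm₂ : P {x | m ≤ g x} ≥ 1/2) :
    ∫ x, |g x - m| ∂P ≤ ∫ x, |g x| ∂P := by
  rcases le_or_gt 0 m with h | h
  · exact med_nonneg P g hmeas hint m h hm₂
  · have h2 : P {x | -m ≤ -g x} ≥ 1/2 := by
      convert hm₁ using 3 with x
      simp
    have h3 := med_nonneg P (fun x => -g x) hmeas.neg hint.neg (-m) (by linarith) h2
    have e1 : ∫ x, |(-g x) - (-m)| ∂P = ∫ x, |g x - m| ∂P := by
      congr 1; funext x
      rw [show (-g x) - (-m) = -(g x - m) by ring, abs_neg]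
    have e2 : ∫ x, |(-g x)| ∂P = ∫ x, |g x| ∂P := by
      congr 1; funext x; rw [abs_neg]
    rw [e1, e2] at h3
    exact h3


/-- Lemma (Rothaus-type): for a probability space `(X, P)`, `g ∈ L²(P)`, `s ≥ 1`
and `m` a median of `g` under `P`,
`∫ g² dP − s (∫ |g| dP)² ≤ ∫ (g−m)² dP − (s−1) (∫ |g−m| dP)²`. -/
theorem stmt_3 {X : Type*} [MeasurableSpace X] (P : Measure X) [IsProbabilityMeasure P]
    (g : X → ℝ) (hg : MemLp g 2 P) (s m : ℝ) (hs : 1 ≤ s)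
    (hm₁ : P {x | g x ≤ m} ≥ 1/2) (hm₂ : P {x | m ≤ g x} ≥ 1/2) :
    ∫ x, (g x)^2 ∂P - s * (∫ x, |g x| ∂P)^2
      ≤ ∫ x, (g x - m)^2 ∂P - (s - 1) * (∫ x, |g x - m| ∂P)^2 := by
  -- replace g by a measurable representative
  obtain ⟨g', hg'meas, hgg'⟩ :
      ∃ g' : X → ℝ, Measurable g' ∧ g =ᵐ[P] g' :=
    ⟨hg.1.mk g, hg.1.stronglyMeasurable_mk.measurable, hg.1.ae_eq_mk⟩
  have hg' : MemLp g' 2 P := hg.ae_eq hgg'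
  have hint : Integrable g' P := hg'.integrable one_le_two
  have hint2 : Integrable (fun x => (g' x)^2) P := hg'.integrable_sq
  have hintm : Integrable (fun x => g' x - m) P := hint.sub (integrable_const m)
  have hintm2 : Integrable (fun x => (g' x - m)^2) P := (hg'.sub (memLp_const m)).integrable_sq
  -- rewrite all integrals in terms of g'
  have e1 : ∫ x, (g x)^2 ∂P = ∫ x, (g' x)^2 ∂P :=
    integral_congr_ae (hgg'.mono fun x hx => by simp only [hx])
  have e2 : ∫ x, |g x| ∂P = ∫ x, |g' x| ∂P :=
    integral_congr_ae (hgg'.mono fun x hx => by simp only [hx])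
  have e3 : ∫ x, (g x - m)^2 ∂P = ∫ x, (g' x - m)^2 ∂P :=
    integral_congr_ae (hgg'.mono fun x hx => by simp only [hx])
  have e4 : ∫ x, |g x - m| ∂P = ∫ x, |g' x - m| ∂P :=
    integral_congr_ae (hgg'.mono fun x hx => by simp only [hx])
  have em₁ : P {x | g' x ≤ m} ≥ 1/2 := by
    have : {x | g x ≤ m} =ᵐ[P] {x | g' x ≤ m} := by
      filter_upwards [hgg'] with x hx
      change (g x ≤ m) = (g' x ≤ m); rw [hx]
    rw [← measure_congr this]; exact hm₁
  have em₂ : P {x | m ≤ g' x} ≥ 1/2 := by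
    have : {x | m ≤ g x} =ᵐ[P] {x | m ≤ g' x} := by
      filter_upwards [hgg'] with x hx
      change (m ≤ g x) = (m ≤ g' x); rw [hx]
    rw [← measure_congr this]; exact hm₂
  rw [e1, e2, e3, e4]
  -- notation
  set a := ∫ x, |g' x| ∂P with ha
  set b := ∫ x, |g' x - m| ∂P with hb
  set c := ∫ x, g' x ∂P with hc
  have hba : b ≤ a := med P g' hg'meas hint m em₁ em₂
  have hb0 : 0 ≤ b := integral_nonneg fun x => abs_nonneg _
  have hca : |c| ≤ a := by
    have := norm_integral_le_integral_norm (μ := P) g'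
    simpa [Real.norm_eq_abs, ha, hc] using this
  have hAB : ∫ x, (g' x)^2 ∂P = ∫ x, (g' x - m)^2 ∂P + (2*m*c - m^2) := by
    have expand : ∀ x, (g' x)^2 = (g' x - m)^2 + (2*m * g' x - m^2) := by
      intro x; ring
    have int3 : Integrable (fun x => 2*m*g' x - m^2) P :=
      (hint.const_mul (2*m)).sub (integrable_const (m^2))
    have int4 : Integrable (fun x => 2*m*g' x) P := hint.const_mul (2*m)
    rw [integral_congr_ae (Filter.Eventually.of_forall expand),
      integral_add hintm2 int3, integral_sub int4 (integrable_const (m^2)),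
      integral_const_mul, integral_const]
    simp [hc]
  rw [hAB]
  have hc2 : c^2 ≤ a^2 := by
    have := mul_self_le_mul_self (abs_nonneg c) hca
    nlinarith [sq_abs c]
  nlinarith [sq_nonneg (c - m), mul_nonneg (sub_nonneg.2 hs) (by nlinarith : (0:ℝ) ≤ a^2 - b^2)]
end

section
/- Let β : [1,∞) → (0,∞) be non-increasing with s ↦ sβ(s) non-decreasing on [2,∞). Then for every a ∈ (0,1/2): (1/2)·a/β(1/a) ≤ sup_{s ≥ 1} a/((1+(s−1)a)β(s)) ≤ 2a/β(1/a). -/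
open Set

/-! Evaluating at `s = 1/a` gives the value `a / ((2 - a) β(1/a)) ≥ (1/2) a / β(1/a)`. Conversely,
every value is at most `a / β(1/a)`: for `s ≤ 1/a` monotonicity of `β` gives `β(1/a) ≤ β(s)`, and
for `s ≥ 1/a` monotonicity of `s β(s)` gives `β(1/a) ≤ a s β(s) ≤ (1 + (s - 1) a) β(s)`. -/

section

variable {β : ℝ → ℝ} {a s : ℝ}

lemma beta_inv_le_mul_beta (hβanti : AntitoneOn β (Ici 1))
    (hβmono : MonotoneOn (fun s => s * β s) (Ici 2)) (ha : 0 < a) (ha' : 2 ≤ 1 / a)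
    (hs : 1 ≤ s) (hβs : 0 ≤ β s) : β (1 / a) ≤ (1 + (s - 1) * a) * β s := by
  have ha1 : a ≤ 1 := by rw [le_div_iff₀ ha] at ha'; linarith
  rcases le_total s (1 / a) with h | h
  · calc β (1 / a) ≤ β s := hβanti hs (mem_Ici.2 (by linarith)) h
      _ = 1 * β s := (one_mul _).symm
      _ ≤ (1 + (s - 1) * a) * β s := by gcongr; nlinarith
  · calc β (1 / a) = a * (1 / a * β (1 / a)) := by field_simp
      _ ≤ a * (s * β s) :=
        mul_le_mul_of_nonneg_left (hβmono (mem_Ici.2 ha') (mem_Ici.2 (ha'.trans h)) h) ha.le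
      _ = (a * s) * β s := by ring
      _ ≤ (1 + (s - 1) * a) * β s := by gcongr; nlinarith

lemma div_mul_beta_le (hβpos : ∀ s ∈ Ici (1:ℝ), 0 < β s) (hβanti : AntitoneOn β (Ici 1))
    (hβmono : MonotoneOn (fun s => s * β s) (Ici 2)) (ha : 0 < a) (ha' : 2 ≤ 1 / a)
    (hs : 1 ≤ s) : a / ((1 + (s - 1) * a) * β s) ≤ a / β (1 / a) :=
  div_le_div_of_nonneg_left ha.le (hβpos _ (mem_Ici.2 (by linarith)))
    (beta_inv_le_mul_beta hβanti hβmono ha ha' hs (hβpos s hs).le)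

lemma half_div_le_div_at_inv (hβ : 0 < β (1 / a)) (ha : 0 < a) (ha2 : a < 2) :
    (1 / 2) * (a / β (1 / a)) ≤ a / ((1 + (1 / a - 1) * a) * β (1 / a)) := by
  have hval : 1 + (1 / a - 1) * a = 2 - a := by field_simp; ring
  rw [hval, show (1:ℝ) / 2 * (a / β (1 / a)) = a / (2 * β (1 / a)) by ring]
  gcongr; linarith

end

/-- Corollary 5 (estimate \eqref{eq:beta}): if `β : [1,∞) → (0,∞)` is non-increasing
and `s ↦ s β(s)` is non-decreasing on `[2,∞)`, then for every `a ∈ (0,1/2)`,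
`(1/2) a/β(1/a) ≤ sup_{s ≥ 1} a/((1+(s−1)a) β(s)) ≤ 2 a/β(1/a)`. -/
theorem stmt_7 (β : ℝ → ℝ)
    (hβpos : ∀ s ∈ Ici (1:ℝ), 0 < β s)
    (hβanti : AntitoneOn β (Ici 1))
    (hβmono : MonotoneOn (fun s => s * β s) (Ici 2)) :
    ∀ a ∈ Ioo (0:ℝ) (1/2),
      (1/2) * (a / β (1/a))
          ≤ sSup { r : ℝ | ∃ s : ℝ, 1 ≤ s ∧ r = a / ((1 + (s - 1) * a) * β s) }
        ∧ sSup { r : ℝ | ∃ s : ℝ, 1 ≤ s ∧ r = a / ((1 + (s - 1) * a) * β s) }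
          ≤ 2 * (a / β (1/a)) := by
  rintro a ⟨ha, ha2⟩
  have ha' : 2 ≤ 1 / a := by rw [le_div_iff₀ ha]; linarith
  have hβa : 0 < β (1 / a) := hβpos _ (mem_Ici.2 (by linarith))
  set S := { r : ℝ | ∃ s : ℝ, 1 ≤ s ∧ r = a / ((1 + (s - 1) * a) * β s) }
  have hbound : ∀ r ∈ S, r ≤ a / β (1 / a) := by
    rintro r ⟨s, hs, rfl⟩
    exact div_mul_beta_le hβpos hβanti hβmono ha ha' hs
  have hmem : a / ((1 + (1 / a - 1) * a) * β (1 / a)) ∈ S := ⟨1 / a, by linarith, rfl⟩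
  have hpos : 0 < a / β (1 / a) := div_pos ha hβa
  constructor
  · exact (half_div_le_div_at_inv hβa ha (by linarith)).trans (le_csSup ⟨_, hbound⟩ hmem)
  · linarith [csSup_le ⟨_, hmem⟩ hbound]
end

section
/- The function x ↦ (arctanh(√(1−e^{−x})))² is convex on (0,∞), and consequently x ↦ arctanh(√(1−e^{−x}))/√x is increasing on (0,∞). -/
open Set

/-- The inverse hyperbolic tangent. -/
noncomputable def artanh (x : ℝ) : ℝ := (1/2) * Real.log ((1 + x) / (1 - x))

lemma artanh_hasDerivAt {s : ℝ} (h0 : -1 < s) (h1 : s < 1) :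
    HasDerivAt artanh (1 / (1 - s^2)) s := by
  have h1p : (0:ℝ) < 1 + s := by linarith
  have h1m : (0:ℝ) < 1 - s := by linarith
  have hnum : HasDerivAt (fun s : ℝ => 1 + s) 1 s := (hasDerivAt_id s).const_add 1
  have hden : HasDerivAt (fun s : ℝ => 1 - s) (-1) s := (hasDerivAt_id s).const_sub 1
  have hq : HasDerivAt (fun s : ℝ => (1 + s) / (1 - s))
      ((1 * (1 - s) - (1 + s) * (-1)) / (1 - s) ^ 2) s := hnum.div hden h1m.ne'
  have hlog := hq.log (by positivity)
  have := hlog.const_mul (1/2 : ℝ)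
  refine this.congr_deriv ?_
  have hne : (1:ℝ) - s^2 ≠ 0 := by nlinarith
  field_simp
  ring

lemma artanh_nonneg {s : ℝ} (h0 : 0 ≤ s) (h1 : s < 1) : 0 ≤ artanh s := by
  have h1m : (0:ℝ) < 1 - s := by linarith
  have : (1:ℝ) ≤ (1 + s) / (1 - s) := by rw [le_div_iff₀ h1m]; linarith
  have := Real.log_nonneg this
  unfold artanh; linarith

lemma artanh_le {s : ℝ} (h0 : 0 ≤ s) (h1 : s < 1) : artanh s ≤ s / (1 - s^2) := by
  have h1p : (0:ℝ) < 1 + s := by linarith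
  have h1m : (0:ℝ) < 1 - s := by linarith
  set y : ℝ := (1 + s) / (1 - s) with hy_def
  have hy : (0:ℝ) < y := by positivity
  have hy1 : (1:ℝ) ≤ y := by rw [hy_def, le_div_iff₀ h1m]; linarith
  have hu : Real.log y ≤ Real.sinh (Real.log y) :=
    Real.self_le_sinh_iff.mpr (Real.log_nonneg hy1)
  rw [Real.sinh_eq, Real.exp_log hy, Real.exp_neg, Real.exp_log hy] at hu
  have key : (y - y⁻¹) / 2 / 2 = s / (1 - s^2) := by
    have hne : (1:ℝ) - s^2 ≠ 0 := by nlinarith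
    rw [hy_def]
    field_simp
    ring
  unfold artanh
  rw [← hy_def, ← key]
  linarith

lemma psi_mono : MonotoneOn (fun s => artanh s / s) (Ioo (0:ℝ) 1) := by
  have hderiv : ∀ s ∈ Ioo (0:ℝ) 1, HasDerivAt (fun s => artanh s / s)
      ((1 / (1 - s^2) * s - artanh s * 1) / s ^ 2) s := by
    intro s hs
    exact (artanh_hasDerivAt (by linarith [hs.1]) hs.2).div (hasDerivAt_id s) hs.1.ne'
  apply monotoneOn_of_deriv_nonneg (convex_Ioo 0 1)
  · intro s hs
    exact ((hderiv s hs).differentiableAt).continuousAt.continuousWithinAt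
  · rw [interior_Ioo]
    intro s hs
    exact ((hderiv s hs).differentiableAt).differentiableWithinAt
  · rw [interior_Ioo]
    intro s hs
    rw [(hderiv s hs).deriv]
    have h1 := artanh_le hs.1.le hs.2
    have h2 : (0:ℝ) < 1 - s^2 := by nlinarith [hs.1, hs.2]
    have h3 : artanh s ≤ 1 / (1 - s^2) * s := by
      rw [div_eq_mul_inv] at h1
      rw [one_div, mul_comm]
      exact h1
    apply div_nonneg (by linarith) (by positivity)

/-- `t x = √(1 - e^{-x})` -/
noncomputable def tt (x : ℝ) : ℝ := Real.sqrt (1 - Real.exp (-x))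

lemma tt_mem {x : ℝ} (hx : 0 < x) : tt x ∈ Ioo (0:ℝ) 1 := by
  have h1 : Real.exp (-x) < 1 := Real.exp_lt_one_iff.mpr (by linarith)
  have h2 : 0 < Real.exp (-x) := Real.exp_pos _
  constructor
  · exact Real.sqrt_pos.mpr (by linarith)
  · rw [tt, Real.sqrt_lt' one_pos]
    norm_num
    linarith

lemma tt_lt_one {x : ℝ} (hx : 0 ≤ x) : tt x < 1 := by
  have h2 : 0 < Real.exp (-x) := Real.exp_pos _
  rw [tt, Real.sqrt_lt' one_pos]
  norm_num
  linarith

lemma tt_sq {x : ℝ} (hx : 0 ≤ x) : tt x ^ 2 = 1 - Real.exp (-x) := by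
  rw [tt, Real.sq_sqrt]
  have := Real.exp_le_one_iff.mpr (neg_nonpos.mpr hx)
  linarith

lemma tt_hasDerivAt {x : ℝ} (hx : 0 < x) :
    HasDerivAt tt (Real.exp (-x) / (2 * tt x)) x := by
  have hin : HasDerivAt (fun x : ℝ => 1 - Real.exp (-x)) (Real.exp (-x)) x := by
    have h1 : HasDerivAt (fun x : ℝ => Real.exp (-x)) (Real.exp (-x) * (-1)) x :=
      (Real.hasDerivAt_exp (-x)).comp x (hasDerivAt_neg x)
    have := h1.const_sub 1
    refine this.congr_deriv ?_
    ring
  have hne : 1 - Real.exp (-x) ≠ 0 := by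
    have : Real.exp (-x) < 1 := Real.exp_lt_one_iff.mpr (by linarith)
    linarith
  exact hin.sqrt hne

lemma g_hasDerivAt {x : ℝ} (hx : 0 < x) :
    HasDerivAt (fun x => artanh (tt x)) (1 / (2 * tt x)) x := by
  have ht := tt_mem hx
  have h := (artanh_hasDerivAt (by linarith [ht.1]) ht.2).comp x (tt_hasDerivAt hx)
  refine h.congr_deriv ?_
  rw [tt_sq hx.le]
  have he : Real.exp (-x) > 0 := Real.exp_pos _
  field_simp
  ring

lemma f_hasDerivAt {x : ℝ} (hx : 0 < x) :
    HasDerivAt (fun x => (artanh (tt x))^2) (artanh (tt x) / tt x) x := by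
  have ht := tt_mem hx
  have h := (g_hasDerivAt hx).pow 2
  refine h.congr_deriv ?_
  have : tt x ≠ 0 := ht.1.ne'
  field_simp
  ring

lemma f_contOn : ContinuousOn (fun x => (artanh (tt x))^2) (Ici (0:ℝ)) := by
  have htc : Continuous tt := Real.continuous_sqrt.comp
    (continuous_const.sub (Real.continuous_exp.comp continuous_neg))
  have h1 : ∀ x ∈ Ici (0:ℝ), (1 + tt x) / (1 - tt x) ≠ 0 := by
    intro x hx
    have h1m : 0 < 1 - tt x := by linarith [tt_lt_one hx]
    have h1p : 0 ≤ tt x := Real.sqrt_nonneg _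
    positivity
  have hq : ContinuousOn (fun x => (1 + tt x) / (1 - tt x)) (Ici (0:ℝ)) := by
    apply ContinuousOn.div
    · exact (continuous_const.add htc).continuousOn
    · exact (continuous_const.sub htc).continuousOn
    · intro x hx; have := tt_lt_one hx; intro h; linarith [sub_eq_zero.mp h]
  have hlog := hq.log h1
  exact ((continuousOn_const.mul hlog).pow 2)

lemma f_convexOn : ConvexOn ℝ (Ici (0:ℝ)) (fun x => (artanh (tt x))^2) := by
  apply MonotoneOn.convexOn_of_deriv (convex_Ici 0) f_contOn
  · rw [interior_Ici]
    intro x hx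
    exact (f_hasDerivAt hx).differentiableAt.differentiableWithinAt
  · rw [interior_Ici]
    intro a ha b hb hab
    rw [(f_hasDerivAt ha).deriv, (f_hasDerivAt hb).deriv]
    have hta := tt_mem ha
    have htb := tt_mem hb
    have htab : tt a ≤ tt b := by
      apply Real.sqrt_le_sqrt
      have := Real.exp_le_exp.mpr (neg_le_neg hab)
      linarith
    exact psi_mono hta htb htab

lemma f_zero : artanh (tt 0) ^ 2 = 0 := by
  norm_num [tt, artanh]

/-- `x ↦ (artanh √(1−e^{−x}))²` is convex on `(0,∞)`, and consequently
`x ↦ artanh(√(1−e^{−x}))/√x` is increasing on `(0,∞)`. -/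
theorem stmt_8 :
    ConvexOn ℝ (Ioi 0) (fun x => (artanh (Real.sqrt (1 - Real.exp (-x))))^2)
      ∧ MonotoneOn (fun x => artanh (Real.sqrt (1 - Real.exp (-x))) / Real.sqrt x)
          (Ioi 0) := by
  have hconv := f_convexOn
  constructor
  · exact hconv.subset Ioi_subset_Ici_self (convex_Ioi 0)
  · intro x hx y hy hxy
    simp only [mem_Ioi] at hx hy
    show artanh (tt x) / Real.sqrt x ≤ artanh (tt y) / Real.sqrt y
    have hgx : 0 ≤ artanh (tt x) := artanh_nonneg (Real.sqrt_nonneg _) (tt_lt_one hx.le)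
    have hgy : 0 ≤ artanh (tt y) := artanh_nonneg (Real.sqrt_nonneg _) (tt_lt_one hy.le)
    -- convexity inequality: f x ≤ (x/y) f y
    have hmu : 0 ≤ x / y := by positivity
    have hlam : 0 ≤ 1 - x / y := by
      have : x / y ≤ 1 := by rw [div_le_one hy]; exact hxy
      linarith
    have hsum : (1 - x / y) + x / y = 1 := by ring
    have hcomb := hconv.2 (self_mem_Ici : (0:ℝ) ∈ Ici 0) (le_of_lt hy : y ∈ Ici 0) hlam hmu hsum
    have hx_eq : (1 - x / y) • (0:ℝ) + (x / y) • y = x := by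
      field_simp
      simp only [smul_eq_mul, mul_zero, zero_add]
      field_simp
    rw [hx_eq] at hcomb
    simp only [smul_eq_mul, f_zero, mul_zero, zero_add] at hcomb
    -- hcomb : artanh (tt x) ^ 2 ≤ (x / y) * artanh (tt y) ^ 2
    have hsq : (artanh (tt x) / Real.sqrt x)^2 ≤ (artanh (tt y) / Real.sqrt y)^2 := by
      rw [div_pow, div_pow, Real.sq_sqrt hx.le, Real.sq_sqrt hy.le,
        div_le_div_iff₀ hx hy]
      have h2 : (x / y) * artanh (tt y) ^ 2 * y = x * artanh (tt y) ^ 2 := by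
        field_simp
      nlinarith [hcomb]
    have h1 : 0 ≤ artanh (tt x) / Real.sqrt x := by positivity
    have h2 : 0 ≤ artanh (tt y) / Real.sqrt y := by positivity
    calc artanh (tt x) / Real.sqrt x
        = Real.sqrt ((artanh (tt x) / Real.sqrt x)^2) := (Real.sqrt_sq h1).symm
      _ ≤ Real.sqrt ((artanh (tt y) / Real.sqrt y)^2) := Real.sqrt_le_sqrt hsq
      _ = artanh (tt y) / Real.sqrt y := Real.sqrt_sq h2
end

section
/- Let Φ : ℝ≥0 → ℝ≥0 be increasing convex with Φ(0)=0, C² in a neighborhood of +∞, with √Φ concave, and let μ_Φ be the probability measure on ℝ with density Z_Φ^{-1} e^{−Φ(|x|)}. Let H be its distribution function. Then H(y) ~ Z_Φ^{-1} e^{−Φ(|y|)}/Φ'(|y|) as y → −∞. -/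
set_option maxHeartbeats 1000000

open Set MeasureTheory Filter

lemma aux_deriv_nonneg_of_monotoneOn {f : ℝ → ℝ} {s : Set ℝ} {x d : ℝ}
    (hs : s ∈ nhds x) (hm : MonotoneOn f s) (hd : HasDerivAt f d x) : 0 ≤ d := by
  rw [hasDerivAt_iff_tendsto_slope] at hd
  have h2 : Tendsto (slope f x) (nhdsWithin x (Ioi x)) (nhds d) :=
    hd.mono_left (nhdsWithin_mono x fun y hy => ne_of_gt hy)
  refine ge_of_tendsto h2 ?_
  filter_upwards [self_mem_nhdsWithin, nhdsWithin_le_nhds hs] with y hy hys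
  have hxs : x ∈ s := mem_of_mem_nhds hs
  have : f x ≤ f y := hm hxs hys (le_of_lt hy)
  rw [slope_def_field]
  have hxy : x < y := hy
  apply div_nonneg <;> linarith

lemma aux_deriv_nonpos_of_antitoneOn {f : ℝ → ℝ} {s : Set ℝ} {x d : ℝ}
    (hs : s ∈ nhds x) (hm : AntitoneOn f s) (hd : HasDerivAt f d x) : d ≤ 0 := by
  have := aux_deriv_nonneg_of_monotoneOn hs hm.neg hd.neg
  linarith

/-- Asymptotics of the distribution function: if `Φ : [0,∞) → [0,∞)` is increasing,
convex, `Φ(0) = 0`, `C²` near `+∞` with `√Φ` concave there, and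
`Φ'(x) → L ∈ (0,∞]` as `x → ∞`, then with `Z_Φ = ∫ e^{−Φ(|x|)} dx` and
`H(y) = Z_Φ⁻¹ ∫_{−∞}^y e^{−Φ(|x|)} dx`, one has
`H(y) ~ Z_Φ⁻¹ e^{−Φ(|y|)}/Φ'(|y|)` as `y → −∞`. -/
theorem stmt_12 (Φ : ℝ → ℝ) (x₀ : ℝ) (hx₀ : 0 ≤ x₀)
    (hmono : StrictMonoOn Φ (Ici 0))
    (hconv : ConvexOn ℝ (Ici 0) Φ)
    (hnonneg : ∀ x ∈ Ici (0:ℝ), 0 ≤ Φ x)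
    (h0 : Φ 0 = 0)
    (hC2 : ContDiffOn ℝ 2 Φ (Ici x₀))
    (hconc : ConcaveOn ℝ (Ici x₀) (fun x => Real.sqrt (Φ x)))
    (hlim : (∃ L : ℝ, 0 < L ∧ Tendsto (deriv Φ) atTop (nhds L))
              ∨ Tendsto (deriv Φ) atTop atTop) :
    Tendsto
      (fun y : ℝ =>
        ((∫ x in Iic y, Real.exp (-Φ |x|)) / (∫ x : ℝ, Real.exp (-Φ |x|))) /
          ((∫ x : ℝ, Real.exp (-Φ |x|))⁻¹ * Real.exp (-Φ |y|) / deriv Φ |y|))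
      atBot (nhds 1) := by
  -- basic notations
  set ψ : ℝ → ℝ := deriv Φ with hψdef
  -- eventual lower bound on the derivative
  obtain ⟨c, hcpos, hcev⟩ : ∃ c : ℝ, 0 < c ∧ ∀ᶠ x in atTop, c ≤ deriv Φ x := by
    rcases hlim with ⟨L, hL, hten⟩ | hten
    · exact ⟨L / 2, by linarith, hten.eventually (eventually_ge_nhds (by linarith))⟩
    · exact ⟨1, one_pos, hten.eventually_ge_atTop 1⟩
  obtain ⟨a₁, ha₁⟩ := eventually_atTop.mp hcev
  set a : ℝ := max a₁ (x₀ + 1) with hadef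
  have hax₀ : x₀ < a := lt_of_lt_of_le (by linarith) (le_max_right _ _)
  have ha0 : 0 < a := lt_of_le_of_lt hx₀ hax₀
  have haa₁ : a₁ ≤ a := le_max_left _ _
  -- derivatives exist above x₀
  have hder : ∀ x ∈ Ioi x₀, HasDerivAt Φ (ψ x) x := by
    intro x hx
    have h1 : ContDiffAt ℝ 2 Φ x := hC2.contDiffAt (Ici_mem_nhds hx)
    exact (h1.differentiableAt (by norm_num)).hasDerivAt
  have hC2' : ContDiffOn ℝ 1 ψ (Ioi x₀) :=
    (hC2.mono Ioi_subset_Ici_self).deriv_of_isOpen isOpen_Ioi (by norm_num)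
  have hder2 : ∀ x ∈ Ioi x₀, HasDerivAt ψ (deriv ψ x) x := by
    intro x hx
    exact (((hC2'.contDiffAt (isOpen_Ioi.mem_nhds hx))).differentiableAt one_ne_zero).hasDerivAt
  -- ψ is monotone on (x₀, ∞)
  have hψmono : MonotoneOn ψ (Ioi x₀) := by
    have : ConvexOn ℝ (Ioi x₀) Φ :=
      hconv.subset (fun x hx => le_trans hx₀ (le_of_lt hx)) (convex_Ioi _)
    exact this.monotoneOn_deriv (fun x hx => (hder x hx).differentiableAt)
  have hψc : ∀ x, a ≤ x → c ≤ ψ x := fun x hx => ha₁ x (le_trans haa₁ hx)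
  have hψpos : ∀ x, a ≤ x → 0 < ψ x := fun x hx => lt_of_lt_of_le hcpos (hψc x hx)
  -- growth of Φ
  have hgrow : ∀ x ∈ Ici a, c * (x - a) ≤ Φ x - Φ a := by
    intro x hx
    refine Convex.mul_sub_le_image_sub_of_le_deriv (convex_Ici a)
      (hC2.continuousOn.mono (fun y (hy : a ≤ y) => le_trans (le_of_lt hax₀) hy))
      (fun y hy => by
        rw [interior_Ici] at hy
        exact (hder y (lt_trans hax₀ hy)).differentiableAt.differentiableWithinAt)
      (fun y hy => by
        rw [interior_Ici] at hy
        exact hψc y (le_of_lt hy)) a self_mem_Ici x hx hx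
  have hΦtop : Tendsto Φ atTop atTop := by
    have h1 : Tendsto (fun x : ℝ => x - a) atTop atTop :=
      tendsto_atTop_add_const_right _ _ tendsto_id
    have h2 : Tendsto (fun x : ℝ => c * (x - a) + Φ a) atTop atTop :=
      tendsto_atTop_add_const_right _ _ (Tendsto.const_mul_atTop hcpos h1)
    have h3 : (fun x : ℝ => c * (x - a) + Φ a) ≤ᶠ[atTop] Φ :=
      eventually_atTop.2 ⟨a, fun x hx => by show c * (x - a) + Φ a ≤ Φ x; linarith [hgrow x hx]⟩
    exact tendsto_atTop_mono' atTop h3 h2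
  have hexp0 : Tendsto (fun x => Real.exp (-Φ x)) atTop (nhds 0) :=
    Real.tendsto_exp_atBot.comp (tendsto_neg_atTop_atBot.comp hΦtop)
  have hΦpos : ∀ x, 0 < x → 0 < Φ x := by
    intro x hx
    have := hmono self_mem_Ici (le_of_lt hx) hx
    rwa [h0] at this
  have hΦa_nonneg : 0 ≤ Φ a := hnonneg a (le_of_lt ha0)
  -- second derivative nonneg
  have hψ'nonneg : ∀ x ∈ Ioi x₀, 0 ≤ deriv ψ x := fun x hx =>
    aux_deriv_nonneg_of_monotoneOn (isOpen_Ioi.mem_nhds hx) hψmono (hder2 x hx)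
  -- sqrt concavity: key second-derivative bound
  have hkey : ∀ x ∈ Ioi a, deriv ψ x ≤ ψ x ^ 2 / (2 * Φ x) := by
    have hsder : ∀ x ∈ Ioi a,
        HasDerivAt (fun y => Real.sqrt (Φ y)) (ψ x / (2 * Real.sqrt (Φ x))) x := by
      intro x hx
      exact (hder x (lt_trans hax₀ hx)).sqrt (ne_of_gt (hΦpos x (lt_trans ha0 hx)))
    have hanti : AntitoneOn (deriv (fun y => Real.sqrt (Φ y))) (Ioi a) := by
      have hcc : ConcaveOn ℝ (Ioi a) (fun y => Real.sqrt (Φ y)) :=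
        hconc.subset (fun y hy => le_of_lt (lt_trans hax₀ hy)) (convex_Ioi _)
      exact hcc.antitoneOn_deriv (fun x hx => (hsder x hx).differentiableAt)
    have hq : AntitoneOn (fun x => ψ x / (2 * Real.sqrt (Φ x))) (Ioi a) := by
      intro x hx y hy hxy
      have := hanti hx hy hxy
      rwa [(hsder x hx).deriv, (hsder y hy).deriv] at this
    intro x hx
    have hxx₀ : x ∈ Ioi x₀ := lt_trans hax₀ hx
    have hΦx : 0 < Φ x := hΦpos x (lt_trans ha0 hx)
    have hsx : 0 < Real.sqrt (Φ x) := Real.sqrt_pos.2 hΦx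
    have hden : HasDerivAt (fun y => 2 * Real.sqrt (Φ y)) (2 * (ψ x / (2 * Real.sqrt (Φ x)))) x :=
      (hsder x hx).const_mul 2
    have hqd : HasDerivAt (fun y => ψ y / (2 * Real.sqrt (Φ y)))
        ((deriv ψ x * (2 * Real.sqrt (Φ x)) - ψ x * (2 * (ψ x / (2 * Real.sqrt (Φ x))))) /
          (2 * Real.sqrt (Φ x)) ^ 2) x :=
      (hder2 x hxx₀).div hden (by positivity)
    have hE := aux_deriv_nonpos_of_antitoneOn (isOpen_Ioi.mem_nhds hx) hq hqd
    have hsq : Real.sqrt (Φ x) ^ 2 = Φ x := Real.sq_sqrt (le_of_lt hΦx)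
    set u := Real.sqrt (Φ x) with hu
    have hnum : deriv ψ x * (2 * u) - ψ x * (2 * (ψ x / (2 * u))) ≤ 0 := by
      rcases div_nonpos_iff.mp hE with ⟨_, h⟩ | ⟨h, _⟩
      · nlinarith
      · exact h
    have h2 : ψ x * (2 * (ψ x / (2 * u))) = ψ x ^ 2 / u := by
      field_simp
    rw [h2] at hnum
    rw [le_div_iff₀ (by positivity)]
    calc deriv ψ x * (2 * Φ x) = (deriv ψ x * (2 * u)) * u := by rw [← hsq]; ring
      _ ≤ (ψ x ^ 2 / u) * u := mul_le_mul_of_nonneg_right (by linarith) hsx.le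
      _ = ψ x ^ 2 := div_mul_cancel₀ _ (ne_of_gt hsx)
  -- FTC identities and bounds
  set F : ℝ → ℝ := fun t => ∫ x in Ioi t, Real.exp (-Φ x) with hFdef
  have hcontΦ : ∀ x ∈ Ioi x₀, ContinuousAt Φ x := fun x hx => (hder x hx).continuousAt
  have main : ∀ t ∈ Ioi a,
      (1 + 1 / (2 * Φ t))⁻¹ ≤ F t * ψ t / Real.exp (-Φ t) ∧ F t * ψ t / Real.exp (-Φ t) ≤ 1 := by
    intro t ht
    have hta : a ≤ t := le_of_lt ht
    have htx₀ : x₀ < t := lt_trans hax₀ ht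
    have hψt : 0 < ψ t := hψpos t hta
    have hΦt : 0 < Φ t := hΦpos t (lt_trans ha0 ht)
    have hexpt : 0 < Real.exp (-Φ t) := Real.exp_pos _
    have hADer : ∀ x ∈ Ici t, HasDerivAt (fun y => -Real.exp (-Φ y)) (ψ x * Real.exp (-Φ x)) x := by
      intro x hx
      have h1 : HasDerivAt (fun y => Real.exp (-Φ y)) (-ψ x * Real.exp (-Φ x)) x := by
        have := ((hder x (lt_of_lt_of_le htx₀ hx)).neg).exp
        simp only [Pi.neg_apply] at this
        convert this using 1
        ring
      have h2 : HasDerivAt (fun y => -Real.exp (-Φ y)) (-(-ψ x * Real.exp (-Φ x))) x := h1.neg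
      convert h2 using 1
      ring
    have hApos : ∀ x ∈ Ioi t, 0 ≤ ψ x * Real.exp (-Φ x) := fun x hx =>
      mul_nonneg (le_of_lt (hψpos x (le_trans hta (le_of_lt hx)))) (Real.exp_pos _).le
    have hup : ∫ x in Ioi t, ψ x * Real.exp (-Φ x) = Real.exp (-Φ t) := by
      have := integral_Ioi_of_hasDerivAt_of_nonneg' hADer hApos hexp0.neg
      simpa using this
    have hupint : IntegrableOn (fun x => ψ x * Real.exp (-Φ x)) (Ioi t) :=
      integrableOn_Ioi_deriv_of_nonneg' hADer hApos hexp0.neg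
    have hFint : IntegrableOn (fun x => Real.exp (-Φ x)) (Ioi t) := by
      have hmeas : AEStronglyMeasurable (fun x => Real.exp (-Φ x)) (volume.restrict (Ioi t)) := by
        apply ContinuousOn.aestronglyMeasurable ?_ measurableSet_Ioi
        apply Real.continuous_exp.comp_continuousOn
        exact (continuousOn_of_forall_continuousAt
          (fun x hx => hcontΦ x (lt_trans htx₀ hx))).neg
      refine Integrable.mono (hupint.const_mul c⁻¹) hmeas ?_
      filter_upwards [ae_restrict_mem measurableSet_Ioi] with x hx
      have hψx : c ≤ ψ x := hψc x (le_trans hta (le_of_lt hx))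
      have hex : (0:ℝ) < Real.exp (-Φ x) := Real.exp_pos _
      rw [Real.norm_eq_abs, Real.norm_eq_abs, abs_of_pos hex, abs_of_nonneg (mul_nonneg (inv_nonneg.mpr hcpos.le) (mul_nonneg (le_trans hcpos.le hψx) hex.le))]
      rw [inv_mul_eq_div, le_div_iff₀ hcpos]
      nlinarith
    have hFle : F t ≤ Real.exp (-Φ t) / ψ t := by
      have h1 : F t ≤ ∫ x in Ioi t, (ψ t)⁻¹ * (ψ x * Real.exp (-Φ x)) := by
        apply setIntegral_mono_on hFint (hupint.const_mul _) measurableSet_Ioi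
        intro x hx
        have hψx : ψ t ≤ ψ x :=
          hψmono (mem_Ioi.2 htx₀) (mem_Ioi.2 (lt_trans htx₀ hx)) (le_of_lt hx)
        have hex : (0:ℝ) < Real.exp (-Φ x) := Real.exp_pos _
        rw [inv_mul_eq_div, le_div_iff₀ hψt]
        nlinarith
      rwa [integral_const_mul, hup, inv_mul_eq_div] at h1
    have hGder : ∀ x ∈ Ici t, HasDerivAt (fun y => -(Real.exp (-Φ y) / ψ y))
        (Real.exp (-Φ x) * (1 + deriv ψ x / ψ x ^ 2)) x := by
      intro x hx
      have hxx₀ : x ∈ Ioi x₀ := lt_of_lt_of_le htx₀ hx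
      have hψx : 0 < ψ x := hψpos x (le_trans hta hx)
      have h1 : HasDerivAt (fun y => Real.exp (-Φ y)) (-ψ x * Real.exp (-Φ x)) x := by
        have := ((hder x hxx₀).neg).exp
        simp only [Pi.neg_apply] at this
        convert this using 1
        ring
      have h2 : HasDerivAt (fun y => -(Real.exp (-Φ y) / ψ y))
          (-((-ψ x * Real.exp (-Φ x) * ψ x - Real.exp (-Φ x) * deriv ψ x) / ψ x ^ 2)) x :=
        (h1.div (hder2 x hxx₀) (ne_of_gt hψx)).neg
      convert h2 using 1
      field_simp
      ring
    have hnegGtend : Tendsto (fun y => -(Real.exp (-Φ y) / ψ y)) atTop (nhds 0) := by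
      apply squeeze_zero_norm' ?_ (by simpa using hexp0.const_mul c⁻¹)
      filter_upwards [eventually_ge_atTop a] with x hx
      have hψx : c ≤ ψ x := hψc x hx
      have hex : (0:ℝ) < Real.exp (-Φ x) := Real.exp_pos _
      have hψx0 : 0 < ψ x := lt_of_lt_of_le hcpos hψx
      rw [norm_neg, Real.norm_eq_abs, abs_of_nonneg (by positivity), inv_mul_eq_div,
        div_le_div_iff₀ hψx0 hcpos]
      nlinarith
    have hDnonneg : ∀ x ∈ Ioi t, 0 ≤ Real.exp (-Φ x) * (1 + deriv ψ x / ψ x ^ 2) := by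
      intro x hx
      have h1 : 0 ≤ deriv ψ x := hψ'nonneg x (lt_of_lt_of_le htx₀ (le_of_lt hx))
      have hψx : 0 < ψ x := hψpos x (le_trans hta (le_of_lt hx))
      have : 0 ≤ deriv ψ x / ψ x ^ 2 := by positivity
      positivity
    have hlowid : ∫ x in Ioi t, Real.exp (-Φ x) * (1 + deriv ψ x / ψ x ^ 2)
        = Real.exp (-Φ t) / ψ t := by
      have := integral_Ioi_of_hasDerivAt_of_nonneg' hGder hDnonneg hnegGtend
      simpa using this
    have hDint : IntegrableOn (fun x => Real.exp (-Φ x) * (1 + deriv ψ x / ψ x ^ 2)) (Ioi t) :=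
      integrableOn_Ioi_deriv_of_nonneg' hGder hDnonneg hnegGtend
    have hcomp : Real.exp (-Φ t) / ψ t ≤ (1 + 1 / (2 * Φ t)) * F t := by
      rw [← hlowid]
      have heq : (1 + 1 / (2 * Φ t)) * F t
          = ∫ x in Ioi t, (1 + 1 / (2 * Φ t)) * Real.exp (-Φ x) := (integral_const_mul _ _).symm
      rw [heq]
      apply setIntegral_mono_on hDint (hFint.const_mul _) measurableSet_Ioi
      intro x hx
      have hxioia : x ∈ Ioi a := mem_Ioi.2 (lt_trans ht hx)
      have hΦx : 0 < Φ x := hΦpos x (lt_trans ha0 hxioia)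
      have hψx : 0 < ψ x := hψpos x (le_of_lt hxioia)
      have hk := hkey x hxioia
      have h1 : deriv ψ x / ψ x ^ 2 ≤ 1 / (2 * Φ x) := by
        rw [div_le_div_iff₀ (by positivity) (by positivity)]
        have hcan : ψ x ^ 2 / (2 * Φ x) * (2 * Φ x) = ψ x ^ 2 :=
          div_mul_cancel₀ _ (by positivity)
        nlinarith [mul_le_mul_of_nonneg_right hk (by positivity : (0:ℝ) ≤ 2 * Φ x)]
      have h2 : 1 / (2 * Φ x) ≤ 1 / (2 * Φ t) := by
        apply one_div_le_one_div_of_le (by positivity)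
        have : Φ t ≤ Φ x := hmono.monotoneOn (le_of_lt (lt_trans ha0 ht) : (0:ℝ) ≤ t)
          (le_of_lt (lt_trans ha0 (lt_trans ht hx)) : (0:ℝ) ≤ x) (le_of_lt hx)
        linarith
      nlinarith [Real.exp_pos (-Φ x)]
    have hs : 0 < 1 + 1 / (2 * Φ t) := by positivity
    constructor
    · rw [le_div_iff₀ hexpt]
      have hstep : Real.exp (-Φ t) ≤ (1 + 1 / (2 * Φ t)) * F t * ψ t :=
        (div_le_iff₀ hψt).mp hcomp
      have := mul_le_mul_of_nonneg_left hstep (inv_nonneg.mpr hs.le)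
      calc (1 + 1 / (2 * Φ t))⁻¹ * Real.exp (-Φ t)
          ≤ (1 + 1 / (2 * Φ t))⁻¹ * ((1 + 1 / (2 * Φ t)) * F t * ψ t) := this
        _ = F t * ψ t := by field_simp
    · exact (div_le_one hexpt).mpr ((le_div_iff₀ hψt).mp hFle)
  have hR : Tendsto (fun t => F t * ψ t / Real.exp (-Φ t)) atTop (nhds 1) := by
    have h1 : Tendsto (fun t => 1 / (2 * Φ t)) atTop (nhds 0) := by
      have h0' : Tendsto (fun t => 2 * Φ t) atTop atTop :=
        Tendsto.const_mul_atTop two_pos hΦtop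
      have := h0'.inv_tendsto_atTop
      rw [show (fun t => 2 * Φ t)⁻¹ = fun t => 1 / (2 * Φ t) by funext t; simp [one_div]] at this
      exact this
    have hlow : Tendsto (fun t => (1 + 1 / (2 * Φ t))⁻¹) atTop (nhds 1) := by
      have h2 : Tendsto (fun t => 1 + 1 / (2 * Φ t)) atTop (nhds 1) := by
        simpa using tendsto_const_nhds.add h1
      simpa using h2.inv₀ (by norm_num)
    refine tendsto_of_tendsto_of_tendsto_of_le_of_le' hlow tendsto_const_nhds ?_ ?_
    · exact eventually_atTop.2 ⟨a + 1, fun t htt =>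
        (main t (mem_Ioi.2 (by linarith))).1⟩
    · exact eventually_atTop.2 ⟨a + 1, fun t htt =>
        (main t (mem_Ioi.2 (by linarith))).2⟩
  -- global integrability and positivity of Z
  set g : ℝ → ℝ := fun x => Real.exp (-Φ |x|) with hgdef
  have hgint : Integrable g := by
    have hgm : Measurable g := by
      have hM : Monotone (fun x : ℝ => Φ (max x 0)) := fun x y hxy =>
        hmono.monotoneOn (le_max_right x 0) (le_max_right y 0) (max_le_max hxy le_rfl)
      have hgeq : g = fun x => Real.exp (-(fun y => Φ (max y 0)) |x|) := by
        funext x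
        simp [hgdef, max_eq_left (abs_nonneg x)]
      rw [hgeq]
      exact Real.measurable_exp.comp ((hM.measurable.comp measurable_abs).neg)
    have he : Integrable (fun x : ℝ => Real.exp (-|x|)) := by
      rw [← integrableOn_univ, ← Iic_union_Ioi (a := (0:ℝ))]
      apply IntegrableOn.union
      · exact (integrableOn_exp_Iic 0).congr_fun
          (fun x hx => by rw [abs_of_nonpos hx, neg_neg]) measurableSet_Iic
      · exact (exp_neg_integrableOn_Ioi 0 one_pos).congr_fun
          (fun x hx => by rw [abs_of_pos hx]; beta_reduce; rw [neg_mul, one_mul]) measurableSet_Ioi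
    have hec : Integrable (fun x : ℝ => Real.exp (-(c * |x|))) := by
      have := he.comp_mul_left' (ne_of_gt hcpos)
      apply this.congr
      filter_upwards with x
      rw [abs_mul, abs_of_pos hcpos]
    refine Integrable.mono (hec.const_mul (Real.exp (c * a))) hgm.aestronglyMeasurable ?_
    filter_upwards with x
    have hex : (0:ℝ) < Real.exp (-(c * |x|)) := Real.exp_pos _
    rw [Real.norm_eq_abs, Real.norm_eq_abs, Real.abs_exp, abs_mul, Real.abs_exp,
      Real.abs_exp, ← Real.exp_add]
    apply Real.exp_le_exp.2
    rcases le_or_gt a |x| with h | h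
    · have := hgrow |x| h
      have := hΦa_nonneg
      nlinarith
    · have h0' : 0 ≤ Φ |x| := hnonneg _ (abs_nonneg x)
      have : c * |x| ≤ c * a := mul_le_mul_of_nonneg_left h.le hcpos.le
      linarith
  have hZpos : 0 < ∫ x : ℝ, g x := by
    rw [integral_pos_iff_support_of_nonneg (fun x => le_of_lt (Real.exp_pos _)) hgint]
    have : Function.support g = univ := by
      ext x; simp [hgdef, Real.exp_ne_zero]
    rw [this]
    simp
  -- transfer
  have hcompR : Tendsto (fun y : ℝ => F (-y) * ψ (-y) / Real.exp (-Φ (-y))) atBot (nhds 1) :=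
    hR.comp tendsto_neg_atBot_atTop
  apply Filter.Tendsto.congr' _ hcompR
  filter_upwards [Iic_mem_atBot (-(a + 1))] with y hy
  have hya : a < -y := by
    have : y ≤ -(a+1) := hy
    linarith
  have hy0 : y ≤ 0 := by linarith
  have habs : |y| = -y := abs_of_nonpos hy0
  have hIic : (∫ x in Iic y, Real.exp (-Φ |x|)) = F (-y) := by
    have h1 : (∫ x in Iic y, Real.exp (-Φ |x|)) = ∫ x in Iic y, Real.exp (-Φ |(-x)|) :=
      setIntegral_congr_fun measurableSet_Iic (fun x _ => by rw [abs_neg])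
    rw [h1, integral_comp_neg_Iic y (fun x => Real.exp (-Φ |x|))]
    apply setIntegral_congr_fun measurableSet_Ioi
    intro x hx
    have hx0 : 0 ≤ x := le_of_lt (lt_trans (lt_trans ha0 hya) hx)
    show Real.exp (-Φ |x|) = Real.exp (-Φ x)
    rw [abs_of_nonneg hx0]
  have hZ : (0:ℝ) < ∫ x : ℝ, g x := hZpos
  have hZ' : (∫ x : ℝ, g x) ≠ 0 := ne_of_gt hZ
  have hBne : Real.exp (-Φ (-y)) ≠ 0 := Real.exp_ne_zero _
  have hCne : ψ (-y) ≠ 0 := ne_of_gt (hψpos _ (le_of_lt hya))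
  show F (-y) * ψ (-y) / Real.exp (-Φ (-y)) = _
  rw [habs, hIic]
  field_simp
end

section
/- Let μ be a probability measure satisfying a Poincaré inequality with constant C_P. Then every smooth function f with ∫f² dμ = 1 satisfies ∫_{f² ≥ 2} f² dμ ≤ 12 C_P ∫|∇f|² dμ. -/
open MeasureTheory

/-- If the probability measure `μ` satisfies a Poincaré inequality with constant
`C_P`, then every smooth `f` with `∫ f² dμ = 1` satisfies
`∫_{f² ≥ 2} f² dμ ≤ 12 C_P ∫ |∇f|² dμ`. -/
theorem stmt_16 {d : ℕ} (μ : Measure (EuclideanSpace ℝ (Fin d)))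
    [IsProbabilityMeasure μ] (CP : ℝ)
    (hPoin : ∀ g : EuclideanSpace ℝ (Fin d) → ℝ, ContDiff ℝ (⊤ : ℕ∞) g →
      ∫ x, (g x)^2 ∂μ - (∫ x, g x ∂μ)^2 ≤ CP * ∫ x, ‖fderiv ℝ g x‖^2 ∂μ)
    (f : EuclideanSpace ℝ (Fin d) → ℝ) (hf : ContDiff ℝ (⊤ : ℕ∞) f)
    (hf2 : ∫ x, (f x)^2 ∂μ = 1) :
    ∫ x in {x | 2 ≤ (f x)^2}, (f x)^2 ∂μ ≤ 12 * CP * ∫ x, ‖fderiv ℝ f x‖^2 ∂μ := by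
  set m := ∫ x, f x ∂μ with hm
  have hfc : Continuous f := hf.continuous
  have hfm : AEStronglyMeasurable f μ := hfc.aestronglyMeasurable
  have hsq_int : Integrable (fun x => (f x)^2) μ := by
    by_contra h
    rw [integral_undef h] at hf2
    norm_num at hf2
  have hf_mem2 : MemLp f 2 μ := (memLp_two_iff_integrable_sq hfm).mpr hsq_int
  have hf_int : Integrable f μ := hf_mem2.integrable (by norm_num)
  have hvar_int : Integrable (fun x => (f x - m)^2) μ := by
    have he : (fun x => (f x - m)^2) = fun x => ((f x)^2 - (2*m) * f x) + m^2 := by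
      funext x; ring
    rw [he]
    exact (hsq_int.sub (hf_int.const_mul (2*m))).add (integrable_const _)
  have hcm : Integrable (fun x => (2*m) * f x) μ := hf_int.const_mul (2*m)
  have hB : Integrable (fun x => (2*m) * f x - m^2) μ := hcm.sub (integrable_const _)
  have hvar_eq : ∫ x, (f x - m)^2 ∂μ = 1 - m^2 := by
    have h1 : ∫ x, (f x - m)^2 ∂μ = ∫ x, ((f x)^2 - ((2*m) * f x - m^2)) ∂μ := by
      congr 1; funext x; ring
    rw [h1, integral_sub hsq_int hB, integral_sub hcm (integrable_const _),
        integral_const_mul, hf2, integral_const]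
    simp only [measure_univ, probReal_univ, ENNReal.toReal_one, one_smul, smul_eq_mul]
    ring
  have hvar_nonneg : 0 ≤ 1 - m^2 := hvar_eq ▸ integral_nonneg (fun x => sq_nonneg _)
  have hPf := hPoin f hf
  rw [hf2] at hPf
  set I := ∫ x, ‖fderiv ℝ f x‖^2 ∂μ with hI
  have hS : MeasurableSet {x | 2 ≤ (f x)^2} :=
    measurableSet_le measurable_const (hfc.measurable.pow_const 2)
  have hpt : ∀ x ∈ {x | 2 ≤ (f x)^2}, (f x)^2 ≤ 12 * (f x - m)^2 := by
    intro x hx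
    have h2 : (2:ℝ) ≤ (f x)^2 := hx
    nlinarith [sq_nonneg (2 * f x - 3 * m)]
  have hmono : ∫ x in {x | 2 ≤ (f x)^2}, (f x)^2 ∂μ
      ≤ ∫ x in {x | 2 ≤ (f x)^2}, 12 * (f x - m)^2 ∂μ :=
    setIntegral_mono_on hsq_int.integrableOn (hvar_int.const_mul 12).integrableOn hS hpt
  have hle : ∫ x in {x | 2 ≤ (f x)^2}, 12 * (f x - m)^2 ∂μ
      ≤ ∫ x, 12 * (f x - m)^2 ∂μ :=
    setIntegral_le_integral (hvar_int.const_mul 12)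
      (Filter.Eventually.of_forall fun x => by positivity)
  have htot : ∫ x, 12 * (f x - m)^2 ∂μ = 12 * (1 - m^2) := by
    rw [integral_const_mul, hvar_eq]
  linarith
end

section
/- Let (P_t) be a Markov semigroup with generator L = Δ − ∇V·∇, symmetric in L²(μ) where dμ = e^{−V}dx is a probability measure. If μ satisfies the super-Poincaré inequality ∫f²dμ − s(∫|f|dμ)² ≤ β(s)∫|∇f|²dμ for all smooth f and all s ≥ 1, then for every t ≥ 0, smooth f, and s ≥ 1: ∫(P_t f)² dμ ≤ e^{−2t/β(s)} ∫f² dμ + s(1 − e^{−2t/β(s)})(∫|f| dμ)². -/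
open MeasureTheory

/-- Proposition (Wang): semigroup decay from a super-Poincaré inequality.
We encode the semigroup `(P_t)` abstractly through the properties used in the
proof (as listed in the context): `P_0 f = f`, `P_t` is a contraction on
`L¹(μ)`, and `u(t) = ∫ (P_t f)² dμ` satisfies `u'(t) = −2 ∫ |∇ P_t f|² dμ`,
where `E g = ∫ |∇ g|² dμ` is the Dirichlet energy. If the super-Poincaré
inequality `∫ g² dμ − s (∫ |g| dμ)² ≤ β(s) E g` holds for all `g = P_t f` and
`s ≥ 1`, then for every `t ≥ 0` and `s ≥ 1`,
`∫ (P_t f)² dμ ≤ e^{−2t/β(s)} ∫ f² dμ + s (1 − e^{−2t/β(s)}) (∫ |f| dμ)²`. -/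
theorem stmt_17 {X : Type*} [MeasurableSpace X] (μ : Measure X)
    [IsProbabilityMeasure μ]
    (β : ℝ → ℝ) (hβ : ∀ s ≥ (1:ℝ), 0 < β s)
    (f : X → ℝ)
    (Pt : ℝ → X → ℝ) (E : (X → ℝ) → ℝ)
    (hP0 : Pt 0 = f)
    (hcontr : ∀ t ≥ (0:ℝ), ∫ x, |Pt t x| ∂μ ≤ ∫ x, |f x| ∂μ)
    (hderiv : ∀ t ≥ (0:ℝ),
      HasDerivAt (fun u => ∫ x, (Pt u x)^2 ∂μ) (-2 * E (Pt t)) t)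
    (hSP : ∀ t ≥ (0:ℝ), ∀ s ≥ (1:ℝ),
      ∫ x, (Pt t x)^2 ∂μ - s * (∫ x, |Pt t x| ∂μ)^2 ≤ β s * E (Pt t)) :
    ∀ t ≥ (0:ℝ), ∀ s ≥ (1:ℝ),
      ∫ x, (Pt t x)^2 ∂μ
        ≤ Real.exp (-2*t/β s) * ∫ x, (f x)^2 ∂μ
            + s * (1 - Real.exp (-2*t/β s)) * (∫ x, |f x| ∂μ)^2 := by
  intro t ht s hs
  set b := β s with hbdef
  have hb : 0 < b := hβ s hs
  set A : ℝ := ∫ x, |f x| ∂μ with hA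
  set u : ℝ → ℝ := fun r => ∫ x, (Pt r x)^2 ∂μ with hu
  have hA0 : 0 ≤ A := integral_nonneg fun x => abs_nonneg _
  -- g is antitone on [0,∞)
  set g : ℝ → ℝ := fun r => Real.exp (2*r/b) * (u r - s * A^2) with hg
  have hgderiv : ∀ r ∈ Set.Ici (0:ℝ), HasDerivAt g
      ((2/b) * Real.exp (2*r/b) * (u r - s * A^2)
        + Real.exp (2*r/b) * (-2 * E (Pt r))) r := by
    intro r hr
    have h1 : HasDerivAt (fun r : ℝ => Real.exp (2*r/b)) ((2/b) * Real.exp (2*r/b)) r := by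
      have : HasDerivAt (fun r : ℝ => 2*r/b) (2/b) r := by
        simpa using ((hasDerivAt_id r).const_mul 2).div_const b
      simpa [mul_comm] using this.exp
    have h2 : HasDerivAt (fun r => u r - s * A^2) (-2 * E (Pt r)) r :=
      (hderiv r hr).sub_const _
    exact (h1.mul h2).congr_deriv (by ring)
  have hanti : AntitoneOn g (Set.Ici (0:ℝ)) := by
    apply antitoneOn_of_deriv_nonpos (convex_Ici 0)
    · intro r hr
      exact ((hgderiv r hr).continuousAt).continuousWithinAt
    · intro r hr
      rw [interior_Ici] at hr
      exact (hgderiv r (Set.mem_Ici.mpr (le_of_lt hr))).differentiableAt.differentiableWithinAt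
    · intro r hr
      rw [interior_Ici] at hr
      have hr' : (0:ℝ) ≤ r := le_of_lt hr
      rw [(hgderiv r hr').deriv]
      have hexp : 0 < Real.exp (2*r/b) := Real.exp_pos _
      have hPabs : 0 ≤ ∫ x, |Pt r x| ∂μ := integral_nonneg fun x => abs_nonneg _
      have hsq : (∫ x, |Pt r x| ∂μ)^2 ≤ A^2 := by
        have := hcontr r hr'
        nlinarith
      have h3 : u r - s * A^2 ≤ b * E (Pt r) := by
        have := hSP r hr' s hs
        nlinarith
      have : (2/b) * (u r - s * A^2) ≤ 2 * E (Pt r) := by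
        rw [div_mul_eq_mul_div, div_le_iff₀ hb]
        nlinarith
      nlinarith
  have hkey : g t ≤ g 0 := hanti (Set.self_mem_Ici) ht ht
  have hg0 : g 0 = u 0 - s * A^2 := by simp [hg]
  have hu0 : u 0 = ∫ x, (f x)^2 ∂μ := by simp [hu, hP0]
  have hexp : Real.exp (-2*t/b) * Real.exp (2*t/b) = 1 := by
    rw [← Real.exp_add]; ring_nf; exact Real.exp_zero
  have hexppos : 0 < Real.exp (-2*t/b) := Real.exp_pos _
  have := hanti
  have hmul : Real.exp (-2*t/b) * g t ≤ Real.exp (-2*t/b) * g 0 :=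
    mul_le_mul_of_nonneg_left hkey (le_of_lt hexppos)
  rw [hg0, hu0] at hmul
  have hgt : Real.exp (-2*t/b) * g t = u t - s * A^2 := by
    simp only [hg, ← mul_assoc, hexp, one_mul]
  rw [hgt, mul_sub] at hmul
  show u t ≤ _
  nlinarith [hmul]
end

section
/- Let Φ : ℝ≥0 → ℝ≥0 be increasing and convex with Φ(0)=0. If Φ'(x) > 0 for x > 0 and √Φ is concave (so Φ'/(2√Φ) is non-increasing), then Φ'(2x) ≤ 2Φ'(x) for all x > 0. -/
open Set

/-- Let `Φ : [0,∞) → [0,∞)` be increasing and convex with `Φ(0) = 0`,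
differentiable on `(0,∞)` with `Φ' > 0` there, and `√Φ` concave.
Then `Φ'(2x) ≤ 2 Φ'(x)` for all `x > 0`. -/
theorem stmt_19 (Φ : ℝ → ℝ)
    (hmono : StrictMonoOn Φ (Ici 0))
    (hconv : ConvexOn ℝ (Ici 0) Φ)
    (hnonneg : ∀ x ∈ Ici (0:ℝ), 0 ≤ Φ x)
    (h0 : Φ 0 = 0)
    (hdiff : ∀ x ∈ Ioi (0:ℝ), DifferentiableAt ℝ Φ x)
    (hderivpos : ∀ x ∈ Ioi (0:ℝ), 0 < deriv Φ x)
    (hconc : ConcaveOn ℝ (Ici 0) (fun x => Real.sqrt (Φ x))) :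
    ∀ x ∈ Ioi (0:ℝ), deriv Φ (2 * x) ≤ 2 * deriv Φ x := by
  intro x hx
  have hx0 : (0:ℝ) < x := hx
  have h2x0 : (0:ℝ) < 2 * x := by linarith
  have hΦx : 0 < Φ x := by
    have := hmono (mem_Ici.mpr (le_refl 0)) (mem_Ici.mpr (le_of_lt hx0)) hx0
    rwa [h0] at this
  have hΦ2x : 0 < Φ (2 * x) := by
    have := hmono (mem_Ici.mpr (le_refl 0)) (mem_Ici.mpr (le_of_lt h2x0)) h2x0
    rwa [h0] at this
  set g : ℝ → ℝ := fun x => Real.sqrt (Φ x) with hg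
  -- derivative of g at any point y > 0
  have hgderiv : ∀ y : ℝ, 0 < y → 0 < Φ y →
      HasDerivAt g (1 / (2 * Real.sqrt (Φ y)) * deriv Φ y) y := by
    intro y hy hΦy
    exact (Real.hasDerivAt_sqrt (ne_of_gt hΦy)).comp y ((hdiff y hy).hasDerivAt)
  have hgx := hgderiv x hx0 hΦx
  have hg2x := hgderiv (2 * x) h2x0 hΦ2x
  have hlt : x < 2 * x := by linarith
  -- g'(2x) ≤ slope ≤ g'(x)
  have h1 : 1 / (2 * Real.sqrt (Φ (2 * x))) * deriv Φ (2 * x) ≤ slope g x (2 * x) :=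
    hconc.le_slope_of_hasDerivAt (le_of_lt hx0) (le_of_lt h2x0) hlt hg2x
  have h2 : slope g x (2 * x) ≤ 1 / (2 * Real.sqrt (Φ x)) * deriv Φ x :=
    hconc.slope_le_of_hasDerivAt (le_of_lt hx0) (le_of_lt h2x0) hlt hgx
  have hgg : 1 / (2 * Real.sqrt (Φ (2 * x))) * deriv Φ (2 * x)
      ≤ 1 / (2 * Real.sqrt (Φ x)) * deriv Φ x := h1.trans h2
  -- √Φ(2x) ≤ 2√Φ(x)
  have hhalf := hconc.2 (self_mem_Ici) (mem_Ici.mpr (le_of_lt h2x0 : (0:ℝ) ≤ 2*x))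
    (by norm_num : (0:ℝ) ≤ 1/2) (by norm_num : (0:ℝ) ≤ 1/2) (by norm_num)
  have hsq : Real.sqrt (Φ (2 * x)) ≤ 2 * Real.sqrt (Φ x) := by
    simp only [smul_eq_mul] at hhalf
    have h0' : Real.sqrt (Φ 0) = 0 := by rw [h0, Real.sqrt_zero]
    have : (1/2 : ℝ) * 0 + 1/2 * (2*x) = x := by ring
    rw [this] at hhalf
    simp only [hg] at hhalf ⊢
    rw [h0'] at hhalf
    linarith
  have hsx : 0 < Real.sqrt (Φ x) := Real.sqrt_pos.mpr hΦx
  have hs2x : 0 < Real.sqrt (Φ (2 * x)) := Real.sqrt_pos.mpr hΦ2x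
  have hdx : 0 < deriv Φ x := hderivpos x hx0
  -- combine
  have key : deriv Φ (2 * x) ≤ 2 * Real.sqrt (Φ (2 * x)) * (1 / (2 * Real.sqrt (Φ x)) * deriv Φ x) := by
    have := mul_le_mul_of_nonneg_left hgg (by positivity : (0:ℝ) ≤ 2 * Real.sqrt (Φ (2 * x)))
    calc deriv Φ (2 * x)
        = 2 * Real.sqrt (Φ (2 * x)) * (1 / (2 * Real.sqrt (Φ (2 * x))) * deriv Φ (2 * x)) := by
          field_simp
      _ ≤ _ := this
  calc deriv Φ (2 * x)
      ≤ 2 * Real.sqrt (Φ (2 * x)) * (1 / (2 * Real.sqrt (Φ x)) * deriv Φ x) := key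
    _ ≤ 2 * (2 * Real.sqrt (Φ x)) * (1 / (2 * Real.sqrt (Φ x)) * deriv Φ x) := by
        apply mul_le_mul_of_nonneg_right
        · linarith
        · positivity
    _ = 2 * deriv Φ x := by field_simp
end
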